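/- arXiv:1508.07896 — 2 statements merged into one kernel-verified Lean document; each statement's English description precedes it below -/
import Mathlib

section
/- For all real a, β, α with 1 < a ≤ e, 0 ≤ β < 1 and α > 0, one has S(1,α,β,a) = 1/(1 − β·log a); in particular S(1,α,β,a) does not depend on α. -/
/-- `S(r,α,β,a) = Σ_{k=0}^∞ (1/k!) (log a)^k (α+βk)^{k+r-1} a^{-(α+βk)}`
(the exponent `k+r-1` is taken in `ℤ`). -/
noncomputable def SJ (r : ℕ) (α β a : ℝ) : ℝ :=
  ∑' k : ℕ, (1 / (Nat.factorial k : ℝ)) * Real.log a ^ k *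
    (α + β * (k : ℝ)) ^ ((k : ℤ) + (r : ℤ) - 1) * a ^ (-(α + β * (k : ℝ)))

/-!
With `t = log a`, `SJ 1 α β a = F(t)` for `F(z) = ∑ₖ (α + βk)^k z^k e^{-(α+βk)z} / k!`.
Since `(α + βk)^k / k! ≤ e^{α/β} (βe)^k`, the series converges locally uniformly, and so is
holomorphic, where `β |z| e^{1 - β re z} < 1`. For small `z` the exponentials can be expanded and
the absolutely convergent double series summed along diagonals: the coefficient of `z^m` is
`(1/m!) ∑ₖ (-1)^{m-k} C(m,k) (α + βk)^m = β^m`, an `m`-th forward difference of a polynomial of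
degree `m`. Hence `F(z) = 1 / (1 - βz)` near `0`, and the identity theorem carries this along a
star-shaped region that contains `t` because `βt < 1`.
-/

open Finset Nat Filter Topology

theorem sum_range_alternating_choose_mul_add_mul_pow {R : Type*} [CommRing R] (m : ℕ) (x y : R) :
    ∑ k ∈ range (m + 1), (-1) ^ (m - k) * (m.choose k : R) * (x + y * k) ^ m = m ! * y ^ m := by
  have hpoly : (fun r : R => (x + y * r) ^ m) = y ^ m • (fun r : R => r ^ m) +
      fun r => ∑ k ∈ range m, (m.choose k * y ^ k * x ^ (m - k)) * r ^ k := by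
    funext r
    rw [Pi.add_apply, Pi.smul_apply, smul_eq_mul, add_comm x, add_pow, sum_range_succ, add_comm]
    simp only [mul_pow, Nat.sub_self, pow_zero, mul_one, Nat.choose_self, Nat.cast_one]
    congr 1
    exact sum_congr rfl fun k _ => by ring
  have h := fwdDiff_iter_eq_sum_shift (1 : R) (fun r : R => (x + y * r) ^ m) m 0
  rw [hpoly, fwdDiff_iter_add, fwdDiff_iter_const_smul, fwdDiff_iter_eq_factorial,
    fwdDiff_iter_sum_mul_pow_eq_zero] at h
  simp only [Pi.add_apply, Pi.smul_apply, smul_eq_mul, Pi.natCast_apply, Pi.zero_apply, add_zero,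
    zero_add, nsmul_eq_mul, mul_one, zsmul_eq_mul] at h
  rw [mul_comm, h]
  push_cast
  rfl

theorem HasSum.sum_antidiagonal {A M : Type*} [AddCommMonoid A] [HasAntidiagonal A]
    [AddCommMonoid M] [TopologicalSpace M] [ContinuousAdd M] [RegularSpace M]
    {f : A × A → M} {a : M} (h : HasSum f a) :
    HasSum (fun n => ∑ p ∈ antidiagonal n, f p) a :=
  (HasAntidiagonal.sigmaAntidiagonalEquivProd.hasSum_iff.mpr h).sigma fun n =>
    (antidiagonal n).hasSum f

theorem add_mul_pow_div_factorial_le {α β : ℝ} (hα : 0 ≤ α) (hβ : 0 < β) (k : ℕ) :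
    (α + β * k) ^ k / k ! ≤ Real.exp (α / β) * (β * Real.exp 1) ^ k := by
  have h := Real.pow_div_factorial_le_exp (x := α / β + k) (by positivity) k
  calc (α + β * k) ^ k / k ! = β ^ k * ((α / β + k) ^ k / k !) := by
        rw [← mul_div_assoc, ← mul_pow]; field_simp
    _ ≤ β ^ k * Real.exp (α / β + k) := by gcongr
    _ = Real.exp (α / β) * (β * Real.exp 1) ^ k := by
        rw [Real.exp_add, mul_pow, ← Real.exp_nat_mul, mul_one]; ring

theorem mul_exp_one_sub_mul_le {b x : ℝ} (hb : b ≤ 1) (hx : x ≤ 1) :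
    b * Real.exp (1 - b * x) ≤ Real.exp (1 - x) :=
  calc b * Real.exp (1 - b * x) ≤ Real.exp (b - 1) * Real.exp (1 - b * x) := by
        gcongr; linarith [Real.add_one_le_exp (b - 1)]
    _ ≤ Real.exp (1 - x) := by
        rw [← Real.exp_add]; gcongr; nlinarith

theorem mul_exp_one_sub_lt_one {u : ℝ} (hu : u ≠ 1) : u * Real.exp (1 - u) < 1 :=
  calc u * Real.exp (1 - u) < Real.exp (u - 1) * Real.exp (1 - u) := by
        gcongr; linarith [Real.add_one_lt_exp (sub_ne_zero.mpr hu)]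
    _ = 1 := by rw [← Real.exp_add]; simp

namespace Lambert

variable (α β : ℝ)

noncomputable def term (k : ℕ) (z : ℂ) : ℂ :=
  (α + β * k : ℂ) ^ k * z ^ k / k ! * Complex.exp (-(α + β * k) * z)

noncomputable def series (z : ℂ) : ℂ := ∑' k, term α β k z

noncomputable def ratio (z : ℂ) : ℝ := β * ‖z‖ * Real.exp (1 - β * z.re)

/-- `ratio β z < 1` alone also holds beyond the line `re z = 1 / β`, across which it fails;
the first condition keeps the star-shaped piece around `0`. -/
def domain : Set ℂ := {z | β * z.re < 1 ∧ ratio β z < 1}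

variable {α β}

theorem norm_add_mul_natCast (hα : 0 ≤ α) (hβ : 0 ≤ β) (k : ℕ) :
    ‖(α + β * k : ℂ)‖ = α + β * k := by
  have h : (α + β * k : ℂ) = ((α + β * k : ℝ) : ℂ) := by push_cast; rfl
  rw [h, Complex.norm_real, Real.norm_of_nonneg (by positivity)]

theorem norm_term (hα : 0 ≤ α) (hβ : 0 ≤ β) (k : ℕ) (z : ℂ) :
    ‖term α β k z‖ = (α + β * k) ^ k * ‖z‖ ^ k / k ! * Real.exp (-(α + β * k) * z.re) := by
  have h : (-(α + β * k : ℂ) * z).re = -(α + β * k) * z.re := by simp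
  rw [term, norm_mul, norm_div, norm_mul, norm_pow, norm_pow, norm_add_mul_natCast hα hβ,
    Complex.norm_exp, h, Complex.norm_natCast]

theorem norm_term_le (hα : 0 ≤ α) (hβ : 0 < β) (k : ℕ) (z : ℂ) :
    ‖term α β k z‖ ≤ Real.exp (α / β - α * z.re) * ratio β z ^ k := by
  have hexp : Real.exp (-(α + β * k) * z.re) * (Real.exp 1) ^ k =
      Real.exp (-(α * z.re)) * Real.exp (1 - β * z.re) ^ k := by
    rw [← Real.exp_nat_mul, ← Real.exp_nat_mul, ← Real.exp_add, ← Real.exp_add]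
    congr 1
    ring
  calc ‖term α β k z‖
      = (α + β * k) ^ k / k ! * (‖z‖ ^ k * Real.exp (-(α + β * k) * z.re)) := by
        rw [norm_term hα hβ.le]; ring
    _ ≤ Real.exp (α / β) * (β * Real.exp 1) ^ k * (‖z‖ ^ k * Real.exp (-(α + β * k) * z.re)) := by
        gcongr; exact add_mul_pow_div_factorial_le hα hβ k
    _ = Real.exp (α / β - α * z.re) * ratio β z ^ k := by
        rw [ratio, sub_eq_add_neg (α / β), Real.exp_add, mul_pow, mul_pow]
        linear_combination (Real.exp (α / β) * β ^ k * ‖z‖ ^ k) * hexp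

theorem ratio_nonneg (hβ : 0 ≤ β) (z : ℂ) : 0 ≤ ratio β z := by
  unfold ratio; positivity

theorem continuous_ratio : Continuous (ratio β) := by
  unfold ratio; fun_prop

theorem summable_norm_term (hα : 0 ≤ α) (hβ : 0 < β) {z : ℂ} (hz : ratio β z < 1) :
    Summable fun k => ‖term α β k z‖ :=
  .of_nonneg_of_le (fun _ => norm_nonneg _) (norm_term_le hα hβ · z)
    ((summable_geometric_of_lt_one (ratio_nonneg hβ.le z) hz).mul_left _)

theorem differentiable_term (k : ℕ) : Differentiable ℂ (term α β k) := by
  unfold term; fun_prop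

theorem differentiableOn_series (hα : 0 ≤ α) (hβ : 0 < β) :
    DifferentiableOn ℂ (series α β) {z | ratio β z < 1} := by
  intro z (hz : ratio β z < 1)
  obtain ⟨r, hzr, hr⟩ := exists_between hz
  let U := {w : ℂ | ratio β w < r ∧ z.re - 1 < w.re}
  have hU : IsOpen U := (isOpen_lt continuous_ratio continuous_const).inter
    (isOpen_lt continuous_const Complex.continuous_re)
  have hzU : z ∈ U := ⟨hzr, by linarith⟩
  have hdiff : DifferentiableOn ℂ (series α β) U := by
    refine Complex.differentiableOn_tsum_of_summable_norm
      ((summable_geometric_of_lt_one ((ratio_nonneg hβ.le z).trans hzr.le) hr).mul_left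
        (Real.exp (α / β - α * (z.re - 1))))
      (fun k => (differentiable_term k).differentiableOn) hU fun k w hw => ?_
    refine (norm_term_le hα hβ k w).trans ?_
    gcongr
    exacts [pow_nonneg (ratio_nonneg hβ.le w) k, hw.2.le, ratio_nonneg hβ.le w, hw.1.le]
  exact (hdiff.differentiableAt (hU.mem_nhds hzU)).differentiableWithinAt

theorem isOpen_domain : IsOpen (domain β) :=
  (isOpen_lt (continuous_const.mul Complex.continuous_re) continuous_const).inter
    (isOpen_lt continuous_ratio continuous_const)

theorem zero_mem_domain : (0 : ℂ) ∈ domain β := by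
  simp [domain, ratio]

theorem ofReal_mem_domain {t : ℝ} (ht : 0 ≤ t) (hβt : β * t < 1) :
    (t : ℂ) ∈ domain β := by
  refine ⟨by simpa using hβt, ?_⟩
  simpa [ratio, abs_of_nonneg ht, mul_assoc] using mul_exp_one_sub_lt_one hβt.ne

theorem starConvex_domain (hβ : 0 ≤ β) : StarConvex ℝ 0 (domain β) := by
  refine starConvex_zero_iff.mpr fun z ⟨hz, hz'⟩ b hb₀ hb₁ => ⟨?_, ?_⟩
  · simp only [Complex.smul_re, smul_eq_mul]
    rcases le_or_gt (β * z.re) 0 with h | h <;> nlinarith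
  · calc ratio β (b • z) = β * ‖z‖ * (b * Real.exp (1 - b * (β * z.re))) := by
          simp only [ratio, norm_smul, Real.norm_of_nonneg hb₀, Complex.smul_re, smul_eq_mul]
          rw [mul_left_comm β b z.re]
          ring
      _ ≤ β * ‖z‖ * Real.exp (1 - β * z.re) := by
          gcongr; exact mul_exp_one_sub_mul_le hb₁ hz.le
      _ < 1 := hz'

theorem isPreconnected_domain (hβ : 0 ≤ β) : IsPreconnected (domain β) :=
  ((starConvex_domain hβ).isPathConnected zero_mem_domain).isConnected.isPreconnected

theorem one_sub_mul_ne_zero {z : ℂ} (hz : z ∈ domain β) : 1 - β * z ≠ 0 := by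
  intro h
  have := congrArg Complex.re h
  simp only [Complex.sub_re, Complex.one_re, Complex.re_ofReal_mul, Complex.zero_re] at this
  linarith [hz.1]

theorem series_zero_right (α : ℝ) (z : ℂ) : series α 0 z = 1 := by
  have h := (NormedSpace.expSeries_div_hasSum_exp (α * z : ℂ)).mul_right (Complex.exp (-(α * z)))
  rw [← Complex.exp_eq_exp_ℂ, ← Complex.exp_add, add_neg_cancel, Complex.exp_zero] at h
  refine h.tsum_eq.symm ▸ tsum_congr fun k => ?_
  simp [term, mul_pow]

variable (α β) in
noncomputable def doubleTerm (z : ℂ) (p : ℕ × ℕ) : ℂ :=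
  (α + β * p.1 : ℂ) ^ p.1 * z ^ p.1 / p.1 ! * ((-(α + β * p.1) * z) ^ p.2 / p.2 !)

theorem hasSum_doubleTerm (z : ℂ) (k : ℕ) :
    HasSum (fun n => doubleTerm α β z (k, n)) (term α β k z) := by
  have h := (NormedSpace.expSeries_div_hasSum_exp (-(α + β * k : ℂ) * z)).mul_left
    ((α + β * k : ℂ) ^ k * z ^ k / k !)
  rwa [← Complex.exp_eq_exp_ℂ] at h

theorem hasSum_norm_doubleTerm (hα : 0 ≤ α) (hβ : 0 ≤ β) (z : ℂ) (k : ℕ) :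
    HasSum (fun n => ‖doubleTerm α β z (k, n)‖) ‖term α β k (-‖z‖)‖ := by
  have h := (NormedSpace.expSeries_div_hasSum_exp ‖(α + β * k : ℂ) * z‖).mul_left
    ‖(α + β * k : ℂ) ^ k * z ^ k / (k ! : ℂ)‖
  have hval : ‖(α + β * k : ℂ) ^ k * z ^ k / (k ! : ℂ)‖ * Real.exp ‖(α + β * k : ℂ) * z‖ =
      ‖term α β k (-‖z‖)‖ := by
    rw [norm_term hα hβ]
    simp only [norm_div, norm_mul, norm_pow, norm_add_mul_natCast hα hβ, Complex.norm_natCast,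
      norm_neg, Complex.norm_real, norm_norm, Complex.neg_re, Complex.ofReal_re, neg_mul_neg]
  rw [← Real.exp_eq_exp_ℝ, hval] at h
  simpa only [doubleTerm, norm_mul, norm_div, norm_pow, norm_neg, Complex.norm_natCast] using h

theorem doubleTerm_add (z : ℂ) (k n : ℕ) :
    doubleTerm α β z (k, n) =
      z ^ (k + n) / (k + n)! * ((-1) ^ n * (k + n).choose k * (α + β * k) ^ (k + n)) := by
  have hfact : ((k + n)! : ℂ) = (k + n).choose k * k ! * n ! := by
    have h := Nat.choose_mul_factorial_mul_factorial (Nat.le_add_right k n)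
    rw [Nat.add_sub_cancel_left] at h
    exact_mod_cast h.symm
  have hchoose : ((k + n).choose k : ℂ) ≠ 0 := by exact_mod_cast (Nat.choose_pos (by omega)).ne'
  rw [hfact, doubleTerm, neg_mul, neg_pow, mul_pow, pow_add, pow_add]
  field_simp

theorem sum_antidiagonal_doubleTerm (z : ℂ) (m : ℕ) :
    ∑ p ∈ antidiagonal m, doubleTerm α β z p = (β * z) ^ m := by
  have hfact : (m ! : ℂ) ≠ 0 := by exact_mod_cast m.factorial_ne_zero
  have hrow (k : ℕ) (hk : k ∈ range (m + 1)) : doubleTerm α β z (k, m - k) =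
      z ^ m / m ! * ((-1) ^ (m - k) * m.choose k * (α + β * k) ^ m) := by
    obtain ⟨n, rfl⟩ := Nat.exists_eq_add_of_le (Nat.lt_succ_iff.mp (mem_range.mp hk))
    rw [Nat.add_sub_cancel_left, doubleTerm_add]
  rw [Nat.sum_antidiagonal_eq_sum_range_succ (fun k n => doubleTerm α β z (k, n)),
    sum_congr rfl hrow, ← mul_sum, sum_range_alternating_choose_mul_add_mul_pow]
  field_simp
  ring

theorem series_eq_inv_of_ratio_neg_norm_lt_one (hα : 0 ≤ α) (hβ : 0 < β) {z : ℂ}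
    (hz : ratio β (-‖z‖) < 1) : series α β z = (1 - β * z)⁻¹ := by
  have hsum : Summable (doubleTerm α β z) :=
    ((summable_prod_of_nonneg fun _ => norm_nonneg _).mpr
      ⟨fun k => (hasSum_norm_doubleTerm hα hβ.le z k).summable, by
        simpa only [(hasSum_norm_doubleTerm hα hβ.le z _).tsum_eq]
          using summable_norm_term hα hβ hz⟩).of_norm
  have hgeom : ‖(β : ℂ) * z‖ < 1 :=
    calc ‖(β : ℂ) * z‖ = β * ‖z‖ * 1 := by simp [abs_of_pos hβ]
      _ ≤ ratio β (-‖z‖) := by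
          rw [ratio, norm_neg, Complex.norm_real, norm_norm]
          gcongr
          exact Real.one_le_exp (by simp; positivity)
      _ < 1 := hz
  have hdiag := hsum.hasSum.sum_antidiagonal
  simp only [sum_antidiagonal_doubleTerm] at hdiag
  exact (hsum.hasSum.prod_fiberwise (hasSum_doubleTerm z)).tsum_eq.trans
    (hdiag.unique (hasSum_geometric_of_norm_lt_one hgeom))

theorem series_eventuallyEq_inv (hα : 0 ≤ α) (hβ : 0 < β) :
    series α β =ᶠ[𝓝 0] fun z => (1 - β * z)⁻¹ := by
  have hcont : ContinuousAt (fun z : ℂ => ratio β (-‖z‖)) 0 := by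
    unfold ratio; fun_prop
  have h0 : ratio β (-‖(0 : ℂ)‖) < 1 := by simp [ratio]
  filter_upwards [hcont.eventually (gt_mem_nhds h0)] with z hz
  exact series_eq_inv_of_ratio_neg_norm_lt_one hα hβ hz

theorem series_eq_inv (hα : 0 ≤ α) (hβ : 0 ≤ β) {z : ℂ} (hz : z ∈ domain β) :
    series α β z = (1 - β * z)⁻¹ := by
  obtain rfl | hβ := hβ.eq_or_lt
  · simp [series_zero_right]
  have hF : AnalyticOnNhd ℂ (series α β) (domain β) :=
    ((differentiableOn_series hα hβ).mono fun _ hw => hw.2).analyticOnNhd isOpen_domain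
  have hG : AnalyticOnNhd ℂ (fun w : ℂ => (1 - β * w)⁻¹) (domain β) :=
    (DifferentiableOn.inv (by fun_prop) fun _ => one_sub_mul_ne_zero).analyticOnNhd isOpen_domain
  exact hF.eqOn_of_preconnected_of_eventuallyEq hG (isPreconnected_domain hβ.le) zero_mem_domain
    (series_eventuallyEq_inv hα hβ) hz

theorem ofReal_SJ_one {a : ℝ} (ha : 0 < a) (α β : ℝ) :
    (SJ 1 α β a : ℂ) = series α β (Real.log a) := by
  rw [SJ, Complex.ofReal_tsum]
  refine tsum_congr fun k => ?_
  rw [Nat.cast_one, add_sub_cancel_right, zpow_natCast, Real.rpow_def_of_pos ha, term]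
  push_cast
  rw [mul_comm (Real.log a : ℂ) (-(α + β * k : ℂ))]
  ring

end Lambert

theorem SJ_one (a β α : ℝ) (ha₁ : 1 < a) (ha₂ : a ≤ Real.exp 1)
    (hβ₀ : 0 ≤ β) (hβ₁ : β < 1) (hα : 0 < α) :
    SJ 1 α β a = 1 / (1 - β * Real.log a) := by
  have ha₀ : 0 < a := by linarith
  have ht₀ : 0 ≤ Real.log a := Real.log_nonneg ha₁.le
  have ht₁ : Real.log a ≤ 1 := by
    simpa using Real.log_le_log ha₀ ha₂
  have hβt : β * Real.log a < 1 := by nlinarith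
  apply Complex.ofReal_injective
  rw [Lambert.ofReal_SJ_one ha₀,
    Lambert.series_eq_inv hα.le hβ₀ (Lambert.ofReal_mem_domain ht₀ hβt)]
  push_cast
  rw [one_div]
end

section
/- For all real a, β, α with 1 < a ≤ e, 0 ≤ β < 1 and α > 0, one has S(2,α,β,a) = α/(1 − β·log a)² + β²·log a/(1 − β·log a)³. -/
open Finset Nat Real fwdDiff

section fwdDiff

variable {R : Type*} [CommRing R]

theorem fwdDiff_iter_pow_succ_apply_zero (n : ℕ) :
    (Δ_[(1 : R)])^[n] (fun r ↦ r ^ (n + 1)) 0 = (n + 1).choose 2 * n ! := by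
  induction n with
  | zero => simp
  | succ n ih =>
    have hΔ : (Δ_[1] fun (r : R) ↦ r ^ (n + 2)) =
        ∑ i ∈ range (n + 2), (n + 2).choose i • fun r ↦ r ^ i := by
      ext x
      simp [nsmul_eq_mul, fwdDiff, add_pow, sum_range_succ, mul_comm]
    rw [Function.iterate_succ_apply, hΔ, fwdDiff_iter_finsetSum, Finset.sum_apply, sum_range_succ,
      sum_range_succ, sum_eq_zero fun i hi ↦ by
        rw [fwdDiff_iter_const_smul, fwdDiff_iter_pow_eq_zero_of_lt (mem_range.mp hi),
          smul_zero, Pi.zero_apply], fwdDiff_iter_const_smul, fwdDiff_iter_const_smul,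
      Pi.smul_apply, Pi.smul_apply, fwdDiff_iter_eq_factorial, ih,
      Nat.choose_symm_of_eq_add (show n + 2 = n + 2 from rfl), Nat.choose_succ_self_right]
    have hchoose : ((n + 1).choose 2 : R) * (n + 2) = ((n + 2).choose 2 : R) * n := by
      have h : (n + 1).choose 2 * (n + 2) = (n + 2).choose 2 * n :=
        Nat.choose_mul_succ_eq (n + 1) 2
      exact_mod_cast congrArg (Nat.cast (R := R)) h
    simp only [nsmul_eq_mul, Pi.natCast_apply, factorial_succ]
    push_cast
    linear_combination (n ! : R) * hchoose

theorem sum_range_alternating_choose_mul_pow_succ (a b : R) (n : ℕ) :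
    ∑ k ∈ range (n + 1), (-1) ^ (n - k) * (n.choose k : R) * (a + b * k) ^ (n + 1) =
      n ! * ((n + 1) * a * b ^ n + (n + 1).choose 2 * b ^ (n + 1)) := by
  have hexpand : (fun y : R ↦ (a + b * y) ^ (n + 1)) =
      ∑ j ∈ range (n + 2), ((n + 1).choose j * a ^ (n + 1 - j) * b ^ j) • fun y : R ↦ y ^ j := by
    ext y
    rw [Finset.sum_apply, add_comm, add_pow]
    exact sum_congr rfl fun j _ ↦ by simp only [Pi.smul_apply, smul_eq_mul]; ring
  have hshift := fwdDiff_iter_eq_sum_shift (1 : R) (fun y ↦ (a + b * y) ^ (n + 1)) n 0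
  rw [hexpand, fwdDiff_iter_finsetSum, Finset.sum_apply, sum_range_succ, sum_range_succ,
    sum_eq_zero fun i hi ↦ by
        rw [fwdDiff_iter_const_smul, fwdDiff_iter_pow_eq_zero_of_lt (mem_range.mp hi),
          smul_zero, Pi.zero_apply], fwdDiff_iter_const_smul, fwdDiff_iter_const_smul,
      Pi.smul_apply, Pi.smul_apply, fwdDiff_iter_eq_factorial, fwdDiff_iter_pow_succ_apply_zero,
      Nat.choose_succ_self_right, Nat.choose_self, Nat.add_sub_cancel_left, Nat.sub_self] at hshift
  simp only [zsmul_eq_mul, smul_eq_mul, zero_add, nsmul_eq_mul, mul_one, Pi.natCast_apply] at hshift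
  push_cast at hshift
  rw [← hshift]
  ring

end fwdDiff

theorem Summable.tsum_eq_tsum_sum_antidiagonal {α A : Type*} [AddCommMonoid A] [HasAntidiagonal A]
    [AddCommMonoid α] [TopologicalSpace α] [T3Space α] [ContinuousAdd α]
    {f : A × A → α} (hf : Summable f) :
    ∑' p, f p = ∑' n, ∑ p ∈ antidiagonal n, f p := by
  rw [← HasAntidiagonal.sigmaAntidiagonalEquivProd.tsum_eq f]
  exact ((HasAntidiagonal.sigmaAntidiagonalEquivProd.summable_iff.mpr hf).tsum_sigma'
    fun n ↦ (hasSum_fintype _).summable).trans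
    (tsum_congr fun n ↦ Finset.tsum_subtype (antidiagonal n) f)

theorem summable_prod_mul_pow_div_factorial {a y : ℕ → ℝ}
    (h : Summable fun k ↦ |a k| * exp |y k|) :
    Summable fun p : ℕ × ℕ ↦ a p.1 * (y p.1 ^ p.2 / p.2 !) := by
  refine Summable.of_abs ((summable_prod_of_nonneg fun _ ↦ abs_nonneg _).mpr ⟨fun k ↦ ?_, ?_⟩)
  · simpa only [abs_mul, abs_div, abs_pow, Nat.abs_cast] using
      (Real.summable_pow_div_factorial |y k|).mul_left |a k|
  · refine h.congr fun k ↦ ?_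
    simp only [abs_mul, abs_div, abs_pow, Nat.abs_cast]
    rw [Real.exp_eq_exp_ℝ, ← ((NormedSpace.expSeries_div_hasSum_exp |y k|).mul_left |a k|).tsum_eq]

theorem tsum_prod_mul_pow_div_factorial {a y : ℕ → ℝ}
    (h : Summable fun k ↦ |a k| * exp |y k|) :
    ∑' p : ℕ × ℕ, a p.1 * (y p.1 ^ p.2 / p.2 !) = ∑' k, a k * exp (y k) := by
  rw [(summable_prod_mul_pow_div_factorial h).tsum_prod']
  · refine tsum_congr fun k ↦ ?_
    rw [Real.exp_eq_exp_ℝ, ← ((NormedSpace.expSeries_div_hasSum_exp (y k)).mul_left (a k)).tsum_eq]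
  · exact fun k ↦ (Real.summable_pow_div_factorial (y k)).mul_left (a k)

theorem analyticOnNhd_tsum_mul_pow {c : ℕ → ℝ} {ρ : ℝ}
    (hc : ∀ r, 0 ≤ r → r < ρ → Summable fun n ↦ |c n| * r ^ n) :
    AnalyticOnNhd ℝ (fun t ↦ ∑' n, c n * t ^ n) (Metric.ball 0 ρ) := by
  set p := FormalMultilinearSeries.ofScalars ℝ c
  have hR : ENNReal.ofReal ρ ≤ p.radius :=
    ENNReal.le_of_forall_nnreal_lt fun r hr ↦ p.le_radius_of_summable <| by
      simpa [p, FormalMultilinearSeries.ofScalars_norm] using hc r r.2 (ENNReal.coe_lt_ofReal.mp hr)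
  simp_rw [← smul_eq_mul (c _), ← FormalMultilinearSeries.ofScalarsSum_eq_tsum,
    ← Metric.eball_ofReal]
  exact p.analyticOnNhd.mono (Metric.eball_subset_eball hR)

noncomputable def abelCoeff (α β : ℝ) (k : ℕ) : ℝ := (α + β * k) ^ (k + 1) / k !

noncomputable def abelSeries (α β x : ℝ) : ℝ :=
  ∑' k : ℕ, abelCoeff α β k * x ^ k * exp (-((α + β * k) * x))

theorem sum_antidiagonal_abelCoeff_mul (α β x : ℝ) (n : ℕ) :
    ∑ p ∈ antidiagonal n, abelCoeff α β p.1 * x ^ p.1 * ((-((α + β * p.1) * x)) ^ p.2 / p.2 !) =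
      x ^ n * ((n + 1) * α * β ^ n + (n + 1).choose 2 * β ^ (n + 1)) := by
  have hterm : ∀ k ∈ range (n + 1),
      abelCoeff α β k * x ^ k * ((-((α + β * k) * x)) ^ (n - k) / (n - k)!) =
        x ^ n / n ! * ((-1) ^ (n - k) * n.choose k * (α + β * k) ^ (n + 1)) := by
    intro k hk
    obtain ⟨m, rfl⟩ := Nat.exists_eq_add_of_le (Nat.lt_succ_iff.mp (mem_range.mp hk))
    rw [abelCoeff, Nat.cast_choose ℝ (Nat.le_add_right k m), Nat.add_sub_cancel_left, neg_pow,
      mul_pow]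
    field_simp
    ring
  rw [Nat.sum_antidiagonal_eq_sum_range_succ_mk, sum_congr rfl hterm, ← mul_sum,
    sum_range_alternating_choose_mul_pow_succ]
  field_simp

theorem abelSeries_eq_exp_mul_tsum (α β x : ℝ) :
    abelSeries α β x = exp (-(α * x)) * ∑' k, abelCoeff α β k * (x * exp (-(β * x))) ^ k := by
  rw [abelSeries, ← tsum_mul_left]
  refine tsum_congr fun k ↦ ?_
  rw [mul_pow, ← exp_nat_mul, show -((α + β * k) * x) = -(α * x) + k * -(β * x) by ring, exp_add]
  ring

theorem abelSeries_zero_right (α x : ℝ) : abelSeries α 0 x = α := by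
  have hterm : ∀ k : ℕ, abelCoeff α 0 k * x ^ k * exp (-((α + 0 * k) * x)) =
      α * exp (-(α * x)) * ((α * x) ^ k / k !) := fun k ↦ by
    rw [abelCoeff]; ring_nf
  rw [abelSeries, tsum_congr hterm, tsum_mul_left, Real.exp_eq_exp_ℝ,
    (NormedSpace.expSeries_div_hasSum_exp (α * x)).tsum_eq, ← Real.exp_eq_exp_ℝ, mul_assoc,
    ← exp_add, neg_add_cancel, exp_zero, mul_one]

section abel

variable {α β : ℝ}

theorem abelCoeff_nonneg (hα : 0 ≤ α) (hβ : 0 ≤ β) (k : ℕ) : 0 ≤ abelCoeff α β k := by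
  unfold abelCoeff; positivity

theorem abelCoeff_mul_pow_le (hα : 0 ≤ α) (hβ : 0 < β) {r : ℝ} (hr : 0 ≤ r) (k : ℕ) :
    abelCoeff α β k * r ^ k ≤ exp (α / β) * ((α + β * k) * (β * exp 1 * r) ^ k) := by
  have hA : 0 ≤ α + β * k := by positivity
  have hexp := pow_div_factorial_le_exp _ (div_nonneg hA hβ.le) k
  rw [div_pow, div_div, div_le_iff₀ (by positivity)] at hexp
  calc abelCoeff α β k * r ^ k = (α + β * k) * ((α + β * k) ^ k / k !) * r ^ k := by
        rw [abelCoeff, pow_succ]; ring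
    _ ≤ (α + β * k) * (β ^ k * exp ((α + β * k) / β)) * r ^ k := by
        gcongr
        rw [div_le_iff₀ (by positivity)]
        linarith [hexp]
    _ = exp (α / β) * ((α + β * k) * (β * exp 1 * r) ^ k) := by
        rw [add_div, mul_div_cancel_left₀ _ hβ.ne', exp_add, ← exp_one_pow]
        ring

theorem summable_abelCoeff_mul_pow (hα : 0 ≤ α) (hβ : 0 < β) {r : ℝ} (hr : 0 ≤ r)
    (hr₁ : β * exp 1 * r < 1) : Summable fun k ↦ abelCoeff α β k * r ^ k := by
  have hρ : ‖β * exp 1 * r‖ < 1 := by rwa [norm_of_nonneg (by positivity)]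
  refine Summable.of_nonneg_of_le (fun k ↦ mul_nonneg (abelCoeff_nonneg hα hβ.le k) (by positivity))
    (abelCoeff_mul_pow_le hα hβ hr) (Summable.mul_left _ ?_)
  simpa [add_mul, mul_assoc] using ((summable_geometric_of_norm_lt_one hρ).mul_left α).add
    ((summable_pow_mul_geometric_of_norm_lt_one 1 hρ).mul_left β)

theorem abelSeries_eq_of_small {x : ℝ} (hα : 0 ≤ α) (hβ : 0 < β) (hx : 0 ≤ x)
    (hsmall : β * exp 1 * (x * exp (β * x)) < 1) :
    abelSeries α β x = α / (1 - β * x) ^ 2 + β ^ 2 * x / (1 - β * x) ^ 3 := by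
  have ht : ‖β * x‖ < 1 := by
    rw [norm_of_nonneg (by positivity)]
    have he : 1 ≤ exp 1 * exp (β * x) :=
      one_le_mul_of_one_le_of_one_le (one_le_exp zero_le_one) (one_le_exp (by positivity))
    nlinarith [mul_le_mul_of_nonneg_left he (by positivity : 0 ≤ β * x)]
  have habs : Summable fun k : ℕ ↦
      |abelCoeff α β k * x ^ k| * exp |-((α + β * k) * x)| := by
    refine ((summable_abelCoeff_mul_pow hα hβ (by positivity) hsmall).mul_left
      (exp (α * x))).congr fun k ↦ ?_
    rw [abs_of_nonneg (mul_nonneg (abelCoeff_nonneg hα hβ.le k) (by positivity)), abs_neg,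
      abs_of_nonneg (by positivity), mul_pow, ← exp_nat_mul,
      show (α + β * k) * x = α * x + k * (β * x) by ring, exp_add]
    ring
  have hdiag : HasSum (fun n ↦ ∑ p ∈ antidiagonal n,
      abelCoeff α β p.1 * x ^ p.1 * ((-((α + β * p.1) * x)) ^ p.2 / p.2 !))
      (α * (1 / (1 - β * x) ^ 2) + β * (1 / (1 - β * x) ^ 3 - 1 / (1 - β * x) ^ 2)) := by
    have h₁ := hasSum_choose_mul_geometric_of_norm_lt_one 1 ht
    have h₂ := hasSum_choose_mul_geometric_of_norm_lt_one 2 ht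
    refine ((h₁.mul_left α).add ((h₂.sub h₁).mul_left β)).congr_fun fun n ↦ ?_
    have hpascal : ((n + 2).choose 2 : ℝ) = ((n + 1).choose 2 : ℕ) + (n + 1) := by
      have h := Nat.choose_succ_succ (n + 1) 1
      rw [Nat.choose_one_right] at h
      exact_mod_cast h.trans (add_comm _ _)
    rw [sum_antidiagonal_abelCoeff_mul, Nat.choose_one_right, hpascal]
    push_cast
    ring
  have hβx : 1 - β * x ≠ 0 := by
    rw [norm_of_nonneg (by positivity)] at ht; linarith
  calc abelSeries α β x
      = ∑' p : ℕ × ℕ, abelCoeff α β p.1 * x ^ p.1 * ((-((α + β * p.1) * x)) ^ p.2 / p.2 !) :=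
        (tsum_prod_mul_pow_div_factorial habs).symm
    _ = ∑' n, ∑ p ∈ antidiagonal n,
          abelCoeff α β p.1 * x ^ p.1 * ((-((α + β * p.1) * x)) ^ p.2 / p.2 !) :=
        (summable_prod_mul_pow_div_factorial habs).tsum_eq_tsum_sum_antidiagonal
    _ = α / (1 - β * x) ^ 2 + β ^ 2 * x / (1 - β * x) ^ 3 := by
        rw [hdiag.tsum_eq]
        field_simp
        ring

theorem analyticOnNhd_abelSeries (hα : 0 ≤ α) (hβ : 0 < β) :
    AnalyticOnNhd ℝ (abelSeries α β) (Set.Ioo 0 (1 / β)) := by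
  have hpow : AnalyticOnNhd ℝ (fun t ↦ ∑' k, abelCoeff α β k * t ^ k)
      (Metric.ball 0 (1 / (β * exp 1))) := by
    refine analyticOnNhd_tsum_mul_pow fun r hr hrR ↦ ?_
    simp_rw [abs_of_nonneg (abelCoeff_nonneg hα hβ.le _)]
    exact summable_abelCoeff_mul_pow hα hβ hr (by rwa [lt_div_iff₀' (by positivity)] at hrR)
  intro x ⟨hx₀, hx₁⟩
  rw [lt_div_iff₀' hβ] at hx₁
  have hlt : β * x < exp (β * x - 1) := by
    linarith [add_one_lt_exp (sub_ne_zero.mpr hx₁.ne)]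
  have ht : x * exp (-(β * x)) ∈ Metric.ball 0 (1 / (β * exp 1)) := by
    rw [mem_ball_zero_iff, norm_of_nonneg (by positivity), lt_div_iff₀' (by positivity)]
    calc β * exp 1 * (x * exp (-(β * x))) = β * x * exp (1 - β * x) := by
          rw [sub_eq_add_neg, exp_add]; ring
      _ < exp (β * x - 1) * exp (1 - β * x) := mul_lt_mul_of_pos_right hlt (exp_pos _)
      _ = 1 := by rw [← exp_add, sub_add_sub_cancel', sub_self, exp_zero]
  rw [show abelSeries α β = _ from funext (abelSeries_eq_exp_mul_tsum α β)]
  exact (analyticAt_rexp.comp (by fun_prop)).mul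
    ((hpow _ ht).comp (f := fun y ↦ y * exp (-(β * y))) (by fun_prop))

theorem abelSeries_eq {x : ℝ} (hα : 0 ≤ α) (hβ : 0 ≤ β) (hx₀ : 0 < x) (hx₁ : β * x < 1) :
    abelSeries α β x = α / (1 - β * x) ^ 2 + β ^ 2 * x / (1 - β * x) ^ 3 := by
  rcases hβ.eq_or_lt with rfl | hβ
  · simp [abelSeries_zero_right]
  have hclosed : AnalyticOnNhd ℝ (fun y ↦ α / (1 - β * y) ^ 2 + β ^ 2 * y / (1 - β * y) ^ 3)
      (Set.Ioo 0 (1 / β)) := fun y ⟨_, hy⟩ ↦ by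
    have : 1 - β * y ≠ 0 := by rw [lt_div_iff₀' hβ] at hy; linarith
    fun_prop (disch := exact pow_ne_zero _ this)
  set ε := 1 / (β * exp 2)
  have hε : 0 < ε := by positivity
  have hεβ : ε < 1 / β :=
    one_div_lt_one_div_of_lt hβ (lt_mul_of_one_lt_right hβ (one_lt_exp_iff.mpr two_pos))
  have hsmall : Set.EqOn (abelSeries α β)
      (fun y ↦ α / (1 - β * y) ^ 2 + β ^ 2 * y / (1 - β * y) ^ 3) (Set.Ioo 0 ε) :=
    fun y ⟨hy₀, hy⟩ ↦ abelSeries_eq_of_small hα hβ hy₀.le <| by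
      rw [lt_div_iff₀' (by positivity)] at hy
      have hβy : β * y ≤ 1 := by nlinarith [one_le_exp (zero_le_two (α := ℝ))]
      calc β * exp 1 * (y * exp (β * y)) ≤ β * exp 1 * (y * exp 1) := by gcongr
        _ = β * exp 2 * y := by rw [show (2 : ℝ) = 1 + 1 by norm_num, exp_add]; ring
        _ < 1 := hy
  refine analyticOnNhd_abelSeries hα hβ |>.eqOn_of_preconnected_of_eventuallyEq hclosed
    isPreconnected_Ioo (z₀ := ε / 2) ⟨by positivity, by linarith⟩
    (Filter.eventuallyEq_of_mem (Ioo_mem_nhds (by positivity) (by linarith)) hsmall)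
    ⟨hx₀, by rwa [lt_div_iff₀' hβ]⟩

end abel

theorem SJ_two_eq_abelSeries (α β : ℝ) {a : ℝ} (ha : 0 < a) :
    SJ 2 α β a = abelSeries α β (log a) := by
  refine tsum_congr fun k ↦ ?_
  rw [show (k : ℤ) + ((2 : ℕ) : ℤ) - 1 = ((k + 1 : ℕ) : ℤ) by push_cast; ring, zpow_natCast,
    rpow_def_of_pos ha, abelCoeff]
  ring_nf

theorem SJ_two (a β α : ℝ) (ha₁ : 1 < a) (ha₂ : a ≤ Real.exp 1)
    (hβ₀ : 0 ≤ β) (hβ₁ : β < 1) (hα : 0 < α) :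
    SJ 2 α β a =
      α / (1 - β * Real.log a) ^ 2 + β ^ 2 * Real.log a / (1 - β * Real.log a) ^ 3 := by
  have hlog₀ : 0 < log a := log_pos ha₁
  have hlog₁ : log a ≤ 1 := by simpa using log_le_log (by positivity) ha₂
  rw [SJ_two_eq_abelSeries α β (by positivity)]
  exact abelSeries_eq hα.le hβ₀ hlog₀ (by nlinarith)
end
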